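/- For an order-m subdivision of a weak tropical complex, the structure constants defined on a ridge r' contained in a ridge r of the original complex are integers. Specifically: let m, n, d be positive integers, let y_1, ..., y_n be vectors in Z^n whose pairwise differences span the sublattice of Z^n of vectors with coordinate sum 0 and each of which has coordinate sum m, and let x_1, ..., x_d be vectors in Z^n each with coordinate sum m-1. If alpha_1, ..., alpha_n are integers with alpha_1 + ... + alpha_n = d, then the unique solution vector (alpha'_1, ..., alpha'_n) of the linear system Y * alpha' = (alpha_i + sum_{j=1}^d x_{j,i})_i, where Y is the matrix with columns y_1, ..., y_n, has integer entries. -/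

import Mathlib

/-!
The right-hand side `b` is an integer vector with coordinate sum `d * m`, so `b - d • y₁` has
coordinate sum zero and lies in the lattice spanned by the differences `y j - y k`; hence
`b = ∑ β j • y j` for some integer vector `β`. The same argument applied to `m • eᵢ` shows that
the `y j` span `ℚⁿ`, so, being `n` vectors, they are linearly independent over `ℚ`, and the
solution `α'` of `Y α' = b` must be `β`.
-/

open Submodule

section

variable {ι κ : Type*}

theorem span_sub_le_span_range {R M : Type*} [Ring R] [AddCommGroup M] [Module R M]
    (y : κ → M) : span R {w | ∃ j k, w = y j - y k} ≤ span R (Set.range y) :=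
  span_le.2 <| by
    rintro _ ⟨j, k, rfl⟩
    exact sub_mem (subset_span ⟨j, rfl⟩) (subset_span ⟨k, rfl⟩)

theorem mem_span_range_of_sum_eq_mul [Fintype ι] {y : κ → ι → ℤ}
    (hspan : ∀ v : ι → ℤ, ∑ i, v i = 0 → v ∈ span ℤ {w | ∃ j k, w = y j - y k})
    {m : ℤ} {j₀ : κ} (hj₀ : ∑ i, y j₀ i = m) {b : ι → ℤ} {c : ℤ} (hb : ∑ i, b i = c * m) :
    b ∈ span ℤ (Set.range y) := by
  have hzero : ∑ i, (b - c • y j₀) i = 0 := by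
    simp [Finset.sum_sub_distrib, ← Finset.mul_sum, hj₀, hb]
  have hdiff := span_sub_le_span_range y (hspan _ hzero)
  simpa using add_mem hdiff (smul_mem _ c (subset_span ⟨j₀, rfl⟩))

theorem intCast_mem_span_range {R : Type*} [Ring R] [Fintype κ] {y : κ → ι → ℤ} {v : ι → ℤ}
    (hv : v ∈ span ℤ (Set.range y)) :
    (fun i => (v i : R)) ∈ span R (Set.range fun j i => (y j i : R)) := by
  obtain ⟨c, rfl⟩ := (mem_span_range_iff_exists_fun ℤ).1 hv
  refine (mem_span_range_iff_exists_fun R).2 ⟨fun j => (c j : R), ?_⟩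
  ext i
  simp

theorem span_intCast_range_eq_top {K : Type*} [Field K] [CharZero K] [Fintype ι] [DecidableEq ι]
    [Fintype κ] {y : κ → ι → ℤ}
    (hspan : ∀ v : ι → ℤ, ∑ i, v i = 0 → v ∈ span ℤ {w | ∃ j k, w = y j - y k})
    {m : ℤ} (hm : m ≠ 0) {j₀ : κ} (hj₀ : ∑ i, y j₀ i = m) :
    span K (Set.range fun j i => (y j i : K)) = ⊤ := by
  refine eq_top_iff.2 ((Pi.basisFun K ι).span_eq ▸ span_le.2 ?_)
  rintro _ ⟨i, rfl⟩
  have hmi : m • Pi.single i 1 ∈ span ℤ (Set.range y) :=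
    mem_span_range_of_sum_eq_mul hspan hj₀ (c := 1) (by simp [Pi.single_apply])
  rw [SetLike.mem_coe]
  convert smul_mem _ (m : K)⁻¹ (intCast_mem_span_range (R := K) hmi) using 1
  ext k
  by_cases hk : k = i <;> simp [hk, Pi.single_apply, hm]

end

theorem subdivision_structure_constants_integral_general
    (m n d : ℕ) (hm : 0 < m) (hn : 0 < n)
    (y : Fin n → Fin n → ℤ)
    (hysum : ∀ j, ∑ i, y j i = (m : ℤ))
    (hspan : ∀ v : Fin n → ℤ, (∑ i, v i = 0) →
      v ∈ Submodule.span ℤ {w : Fin n → ℤ | ∃ j k, w = y j - y k})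
    (x : Fin d → Fin n → ℤ)
    (hxsum : ∀ j, ∑ i, x j i = (m : ℤ) - 1)
    (α : Fin n → ℤ) (hα : ∑ i, α i = (d : ℤ))
    (α' : Fin n → ℚ)
    (hsol : ∀ i, ∑ j, (y j i : ℚ) * α' j = (α i : ℚ) + ∑ j, (x j i : ℚ)) :
    ∀ j, ∃ z : ℤ, α' j = (z : ℚ) := by
  let j₀ : Fin n := ⟨0, hn⟩
  have hb : ∑ i, (α i + ∑ j, x j i) = d * m := by
    rw [Finset.sum_add_distrib, Finset.sum_comm, hα]
    simp only [hxsum, Finset.sum_const, Finset.card_univ, Fintype.card_fin, nsmul_eq_mul]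
    ring
  obtain ⟨β, hβ⟩ := (mem_span_range_iff_exists_fun ℤ).1
    (mem_span_range_of_sum_eq_mul hspan (hysum j₀) hb)
  have hindep : LinearIndependent ℚ fun j i => (y j i : ℚ) :=
    linearIndependent_of_top_le_span_of_card_eq_finrank
      (span_intCast_range_eq_top hspan (by exact_mod_cast hm.ne') (hysum j₀)).ge (by simp)
  refine fun j => ⟨β j, Fintype.linearIndependent_iffₛ.1 hindep α' (fun j => β j) ?_ j⟩
  ext i
  have hβi := congrArg (fun v : Fin n → ℤ => (v i : ℚ)) hβ
  simp only [Finset.sum_apply, Pi.smul_apply, smul_eq_mul, Int.cast_sum, Int.cast_mul,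
    Int.cast_add] at hβi
  simp only [Finset.sum_apply, Pi.smul_apply, smul_eq_mul, mul_comm _ ((y _ i : ℤ) : ℚ), hsol i, ← hβi]

/-- Proposition 3.2, integrality for ridges of the subdivision
contained in a ridge of the original complex: with `y_1, …, y_n ∈ ℤ^n` the
vertices of a unimodular simplex in the `m`-fold dilated standard simplex
(so each has coordinate sum `m` and pairwise differences spanning the
zero-sum sublattice), `x_1, …, x_d ∈ ℤ^n` with coordinate sums `m - 1`, and
integers `α_1, …, α_n` summing to `d`, the solution `α'` of the linear system
`Y α' = (α_i + ∑_j x_{j,i})_i` has integer entries. -/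
theorem subdivision_structure_constants_integral
    (m n d : ℕ) (hm : 0 < m) (hn : 0 < n) (hd : 0 < d)
    (y : Fin n → Fin n → ℤ)
    (hysum : ∀ j, ∑ i, y j i = (m : ℤ))
    (hspan : ∀ v : Fin n → ℤ, (∑ i, v i = 0) →
      v ∈ Submodule.span ℤ {w : Fin n → ℤ | ∃ j k, w = y j - y k})
    (x : Fin d → Fin n → ℤ)
    (hxsum : ∀ j, ∑ i, x j i = (m : ℤ) - 1)
    (α : Fin n → ℤ) (hα : ∑ i, α i = (d : ℤ))
    (α' : Fin n → ℚ)
    (hsol : ∀ i, ∑ j, (y j i : ℚ) * α' j = (α i : ℚ) + ∑ j, (x j i : ℚ)) :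
    ∀ j, ∃ z : ℤ, α' j = (z : ℚ) :=
  subdivision_structure_constants_integral_general m n d hm hn y hysum hspan x hxsum α hα α' hsol
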